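/- Let n be a natural number, Ω a finite set, a, b : Fin n → Ω and c, d ∈ Ω such that the 2n+2 points a(1),…,a(n), b(1),…,b(n), c, d are pairwise distinct. Let x : Fin n → ℝ satisfy ∑_{i} |x(i)| ≤ 1/2. Then there exists a probability distribution P on Ω such that P(c) = 1/2, P(a(i)) − P(b(i)) = x(i) for all i, and the support of P (the set of points with P(ω) > 0) has cardinality at most n + 2. -/
import Mathlib


open Classical in
/-- Given pairwise distinct points `a(1),…,a(n), b(1),…,b(n), c, d` in a finite set `Ω`
and a vector `x` of ℓ₁ norm at most 1/2, there is a probability distribution `P` on `Ω`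
with `P(c) = 1/2`, `P(a i) − P(b i) = x i`, and support of size at most `n + 2`. -/
theorem small_support_distribution (n : ℕ) (Ω : Type*) [Fintype Ω]
    (a b : Fin n → Ω) (c d : Ω)
    (ha : Function.Injective a) (hb : Function.Injective b)
    (hab : ∀ i j, a i ≠ b j)
    (hcd : c ≠ d)
    (hca : ∀ i, c ≠ a i) (hcb : ∀ i, c ≠ b i)
    (hda : ∀ i, d ≠ a i) (hdb : ∀ i, d ≠ b i)
    (x : Fin n → ℝ) (hx : (∑ i, |x i|) ≤ 1 / 2) :
    ∃ P : Ω → ℝ,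
      (∀ ω, 0 ≤ P ω) ∧ (∑ ω, P ω) = 1 ∧ P c = 1 / 2 ∧
      (∀ i, P (a i) - P (b i) = x i) ∧
      (Finset.univ.filter fun ω => 0 < P ω).card ≤ n + 2 := by
  set S : ℝ := ∑ i, |x i| with hS
  have hSnn : 0 ≤ S := Finset.sum_nonneg fun i _ => abs_nonneg _
  set P : Ω → ℝ := fun ω =>
    (if ω = c then (1:ℝ)/2 else 0) + (if ω = d then 1/2 - S else 0)
    + (∑ i, if ω = a i then max (x i) 0 else 0)
    + (∑ i, if ω = b i then max (-x i) 0 else 0) with hP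
  have hPa : ∀ i, P (a i) = max (x i) 0 := by
    intro i
    simp only [hP]
    rw [if_neg (fun h => hca i h.symm), if_neg (fun h => hda i h.symm)]
    have h1 : (∑ j, if a i = a j then max (x j) 0 else 0) = max (x i) 0 := by
      rw [Finset.sum_eq_single i]
      · simp
      · intro j _ hj
        rw [if_neg (fun h => hj (ha h.symm))]
      · simp
    have h2 : (∑ j, if a i = b j then max (-x j) 0 else 0) = 0 := by
      apply Finset.sum_eq_zero
      intro j _
      rw [if_neg (hab i j)]
    rw [h1, h2]; ring
  have hPb : ∀ i, P (b i) = max (-x i) 0 := by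
    intro i
    simp only [hP]
    rw [if_neg (fun h => hcb i h.symm), if_neg (fun h => hdb i h.symm)]
    have h1 : (∑ j, if b i = a j then max (x j) 0 else 0) = 0 := by
      apply Finset.sum_eq_zero
      intro j _
      rw [if_neg (fun h => hab j i h.symm)]
    have h2 : (∑ j, if b i = b j then max (-x j) 0 else 0) = max (-x i) 0 := by
      rw [Finset.sum_eq_single i]
      · simp
      · intro j _ hj
        rw [if_neg (fun h => hj (hb h.symm))]
      · simp
    rw [h1, h2]; ring
  refine ⟨P, ?_, ?_, ?_, ?_, ?_⟩
  · intro ω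
    have h0 : (0:ℝ) ≤ if ω = c then (1:ℝ)/2 else 0 := by split <;> norm_num
    have h1 : (0:ℝ) ≤ if ω = d then 1/2 - S else 0 := by
      split
      · linarith
      · exact le_refl 0
    have h2 : (0:ℝ) ≤ ∑ i, if ω = a i then max (x i) 0 else 0 :=
      Finset.sum_nonneg fun i _ => by split <;> simp [le_max_right]
    have h3 : (0:ℝ) ≤ ∑ i, if ω = b i then max (-x i) 0 else 0 :=
      Finset.sum_nonneg fun i _ => by split <;> simp [le_max_right]
    simp only [hP]
    linarith
  · simp only [hP]
    rw [Finset.sum_add_distrib, Finset.sum_add_distrib, Finset.sum_add_distrib]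
    rw [Finset.sum_ite_eq' Finset.univ c, Finset.sum_ite_eq' Finset.univ d]
    rw [Finset.sum_comm, Finset.sum_comm (s := Finset.univ) (t := Finset.univ)
      (f := fun ω i => if ω = b i then max (-x i) 0 else 0)]
    simp only [Finset.sum_ite_eq' Finset.univ, Finset.mem_univ, if_true]
    have : ∀ i, max (x i) 0 + max (-x i) 0 = |x i| := by
      intro i
      rcases le_or_gt 0 (x i) with h | h
      · rw [max_eq_left h, max_eq_right (by linarith), abs_of_nonneg h]; ring
      · rw [max_eq_right h.le, max_eq_left (by linarith), abs_of_neg h]; ring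
    have hsum : (∑ i, max (x i) 0) + (∑ i, max (-x i) 0) = S := by
      rw [hS, ← Finset.sum_add_distrib]
      exact Finset.sum_congr rfl fun i _ => this i
    linarith
  · simp only [hP, if_pos rfl, if_neg hcd]
    have h1 : (∑ j, if c = a j then max (x j) 0 else 0) = 0 :=
      Finset.sum_eq_zero fun j _ => if_neg (hca j)
    have h2 : (∑ j, if c = b j then max (-x j) 0 else 0) = 0 :=
      Finset.sum_eq_zero fun j _ => if_neg (hcb j)
    rw [h1, h2]; norm_num
  · intro i
    rw [hPa i, hPb i]
    rcases le_or_gt 0 (x i) with h | h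
    · rw [max_eq_left h, max_eq_right (by linarith)]; ring
    · rw [max_eq_right h.le, max_eq_left (by linarith)]; ring
  · have hsub : (Finset.univ.filter fun ω => 0 < P ω) ⊆
        insert c (insert d (Finset.univ.image fun i => if 0 < x i then a i else b i)) := by
      intro ω hω
      rw [Finset.mem_filter] at hω
      by_cases h1 : ω = c
      · exact Finset.mem_insert.2 (Or.inl h1)
      by_cases h2 : ω = d
      · exact Finset.mem_insert.2 (Or.inr (Finset.mem_insert.2 (Or.inl h2)))
      have hpos := hω.2
      simp only [hP, if_neg h1, if_neg h2, zero_add] at hpos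
      have : (0 < ∑ i, if ω = a i then max (x i) 0 else 0) ∨
          (0 < ∑ i, if ω = b i then max (-x i) 0 else 0) := by
        by_contra h
        push_neg at h
        have n1 : (∑ i, if ω = a i then max (x i) 0 else 0) = 0 :=
          le_antisymm h.1 (Finset.sum_nonneg fun i _ => by positivity)
        have n2 : (∑ i, if ω = b i then max (-x i) 0 else 0) = 0 :=
          le_antisymm h.2 (Finset.sum_nonneg fun i _ => by positivity)
        rw [n1, n2] at hpos; linarith
      refine Finset.mem_insert.2 (Or.inr (Finset.mem_insert.2 (Or.inr ?_)))
      rw [Finset.mem_image]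
      rcases this with h | h
      · obtain ⟨i, _, hi⟩ := Finset.exists_lt_of_sum_lt
          (show (∑ _i : Fin n, (0:ℝ)) < ∑ i, (if ω = a i then max (x i) 0 else 0) by
            simpa using h)
        by_cases hia : ω = a i
        · refine ⟨i, Finset.mem_univ i, ?_⟩
          rw [if_pos, hia]
          rw [if_pos hia] at hi
          rcases le_or_gt (x i) 0 with hx0 | hx0
          · rw [max_eq_right hx0] at hi; exact absurd hi (lt_irrefl 0)
          · exact hx0
        · rw [if_neg hia] at hi; exact absurd hi (lt_irrefl 0)
      · obtain ⟨i, _, hi⟩ := Finset.exists_lt_of_sum_lt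
          (show (∑ _i : Fin n, (0:ℝ)) < ∑ i, (if ω = b i then max (-x i) 0 else 0) by
            simpa using h)
        by_cases hib : ω = b i
        · refine ⟨i, Finset.mem_univ i, ?_⟩
          rw [if_pos hib] at hi
          rcases le_or_gt 0 (x i) with hx0 | hx0
          · rw [max_eq_right (by linarith)] at hi; exact absurd hi (lt_irrefl 0)
          · rw [if_neg (not_lt.2 hx0.le), hib]
        · rw [if_neg hib] at hi; exact absurd hi (lt_irrefl 0)
    calc (Finset.univ.filter fun ω => 0 < P ω).card
        ≤ (insert c (insert d (Finset.univ.image fun i => if 0 < x i then a i else b i))).card :=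
          Finset.card_le_card hsub
      _ ≤ (insert d (Finset.univ.image fun i => if 0 < x i then a i else b i)).card + 1 :=
          Finset.card_insert_le _ _
      _ ≤ (Finset.univ.image fun i => if 0 < x i then a i else b i).card + 1 + 1 := by
          have := Finset.card_insert_le d (Finset.univ.image fun i => if 0 < x i then a i else b i)
          omega
      _ ≤ n + 2 := by
          have := Finset.card_image_le (s := (Finset.univ : Finset (Fin n)))
            (f := fun i => if 0 < x i then a i else b i)
          simp at this; omega
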